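/- arXiv:1307.2054 — 3 statements merged into one kernel-verified Lean document; each statement's English description precedes it below -/
import Mathlib

section
/- Let G be a finite group, let A be a finite G-set, and let H be a subgroup of G. For a subgroup K ≤ G, let c_K(A) denote the number of G-orbits of A containing a point whose stabilizer is exactly K. Let μ denote the Möbius function of the lattice of subgroups of G (ordered by inclusion). Then c_H(A) · [N_G(H) : H] = Σ_{K ≤ G} μ(H, K) · |A^K|, where the sum is over all subgroups K of G, A^K is the K-fixed-point set of A, and N_G(H) is the normalizer of H in G. -/
/-- `orbitTypeCount G A K` is the number of `G`-orbits of `A` containing a point whose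
stabilizer is exactly `K`. -/
noncomputable def orbitTypeCount (G : Type*) [Group G] (A : Type*) [MulAction G A]
    (K : Subgroup G) : ℕ :=
  Nat.card {ω : MulAction.orbitRel.Quotient G A //
    ∃ a ∈ ω.orbit, MulAction.stabilizer G a = K}

/-!
Sort the points of `A` by their stabilizers: `|A^K|` is the number of points whose stabilizer
contains `K`, so Möbius inversion over the subgroup lattice isolates the number of points whose
stabilizer is exactly `H`. Those points lie in `c_H(A)` orbits, and inside the orbit of a point
`a` with stabilizer `H` they are the points `g • a` with `g ∈ N_G(H)`: an `N_G(H)`-orbit whose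
stabilizer is `H`, hence of size `[N_G(H) : H]`.
-/

open MulAction

section Moebius

variable {α : Type*} [PartialOrder α] [Fintype α] [DecidableLE α] {μ : α → α → ℤ} {a : α}

theorem sum_filter_le_moebius_eq_ite [DecidableEq α] (h_refl : μ a a = 1)
    (h_not_le : ∀ b, ¬ a ≤ b → μ a b = 0)
    (h_sum : ∀ b, a < b → ∑ᶠ c ∈ Set.Icc a b, μ a c = 0) (b : α) :
    ∑ c ∈ Finset.univ.filter (· ≤ b), μ a c = if b = a then 1 else 0 := by
  have h_Icc : ∑ c ∈ Finset.univ.filter (· ≤ b), μ a c = ∑ᶠ c ∈ Set.Icc a b, μ a c := by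
    refine (finsum_mem_eq_sum_of_inter_support_eq _ ?_).symm
    ext c
    simp only [Set.mem_inter_iff, Set.mem_Icc, Function.mem_support, Finset.coe_filter,
      Finset.mem_univ, true_and, Set.mem_ofPred_eq]
    exact ⟨fun ⟨⟨_, hcb⟩, hc⟩ => ⟨hcb, hc⟩,
      fun ⟨hcb, hc⟩ => ⟨⟨not_not.1 (mt (h_not_le c) hc), hcb⟩, hc⟩⟩
  rw [h_Icc]
  rcases eq_or_ne b a with rfl | hba
  · rw [if_pos rfl, Set.Icc_self, finsum_mem_singleton, h_refl]
  rw [if_neg hba]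
  by_cases hab : a ≤ b
  · exact h_sum b (lt_of_le_of_ne hab hba.symm)
  · rw [Set.Icc_eq_empty hab, finsum_mem_empty]

theorem sum_moebius_mul_sum_filter_ge (h_refl : μ a a = 1)
    (h_not_le : ∀ b, ¬ a ≤ b → μ a b = 0)
    (h_sum : ∀ b, a < b → ∑ᶠ c ∈ Set.Icc a b, μ a c = 0) (f : α → ℤ) :
    ∑ b, μ a b * ∑ c ∈ Finset.univ.filter (b ≤ ·), f c = f a := by
  classical
  calc ∑ b, μ a b * ∑ c ∈ Finset.univ.filter (b ≤ ·), f c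
      = ∑ c, (∑ b ∈ Finset.univ.filter (· ≤ c), μ a b) * f c := by
        simp only [Finset.mul_sum, Finset.sum_mul, Finset.sum_filter, mul_ite, ite_mul, mul_zero,
          zero_mul]
        exact Finset.sum_comm
    _ = ∑ c, (if c = a then 1 else 0) * f c := by
        simp only [sum_filter_le_moebius_eq_ite h_refl h_not_le h_sum]
    _ = f a := by simp

end Moebius

section OrbitType

variable {G : Type*} [Group G] {A : Type*} [MulAction G A] {H : Subgroup G} {a : A}

theorem stabilizer_smul_eq_iff_mem_normalizer (ha : stabilizer G a = H) (g : G) :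
    stabilizer G (g • a) = H ↔ g ∈ Subgroup.normalizer (H : Set G) := by
  rw [stabilizer_smul_eq_stabilizer_map_conj, ha, Subgroup.mem_normalizer_iff_map_conj_eq]
  rfl

theorem orbit_normalizer_eq (ha : stabilizer G a = H) :
    orbit (Subgroup.normalizer (H : Set G)) a = {b ∈ orbit G a | stabilizer G b = H} := by
  ext b
  constructor
  · rintro ⟨n, rfl⟩
    exact ⟨mem_orbit a (n : G), (stabilizer_smul_eq_iff_mem_normalizer ha n).2 n.2⟩
  · rintro ⟨⟨g, rfl⟩, hg⟩
    exact ⟨⟨g, (stabilizer_smul_eq_iff_mem_normalizer ha g).1 hg⟩, rfl⟩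

theorem ncard_orbit_normalizer (ha : stabilizer G a = H) :
    (orbit (Subgroup.normalizer (H : Set G)) a).ncard =
      H.relIndex (Subgroup.normalizer (H : Set G)) := by
  rw [← index_stabilizer]
  subst ha
  rfl

end OrbitType

section Counting

variable {G : Type*} [Group G] {A : Type*} [MulAction G A] [Fintype A]

theorem card_stabilizer_eq_orbitTypeCount_mul_relIndex (H : Subgroup G) :
    Nat.card {a : A // stabilizer G a = H} =
      orbitTypeCount G A H * H.relIndex (Subgroup.normalizer (H : Set G)) := by
  classical
  set S := Finset.univ.filter fun a : A => stabilizer G a = H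
  let π : A → orbitRel.Quotient G A := Quotient.mk''
  have h_card : Nat.card {a : A // stabilizer G a = H} = S.card := by
    rw [Nat.card_eq_fintype_card, Fintype.card_subtype]
  have h_image : orbitTypeCount G A H = (S.image π).card := by
    rw [orbitTypeCount, ← Nat.card_eq_finsetCard]
    refine Nat.card_congr (Equiv.subtypeEquivRight fun ω => ?_)
    simp [S, π, orbitRel.Quotient.mem_orbit, and_comm]
  have h_fiber : ∀ ω ∈ S.image π,
      (S.filter (π · = ω)).card = H.relIndex (Subgroup.normalizer (H : Set G)) := by
    simp only [Finset.mem_image]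
    rintro _ ⟨a, haS, rfl⟩
    have ha : stabilizer G a = H := (Finset.mem_filter.1 haS).2
    rw [← ncard_orbit_normalizer ha, orbit_normalizer_eq ha, Set.ncard_eq_toFinset_card']
    congr 1
    ext b
    simp [S, π, Quotient.eq'', orbitRel_apply, and_comm]
  rw [h_card, Finset.card_eq_sum_card_image π S, Finset.sum_const_nat h_fiber, h_image]

theorem card_fixedPoints_eq_sum_card_stabilizer_eq [Fintype (Subgroup G)]
    [DecidableLE (Subgroup G)] (K : Subgroup G) :
    Nat.card (fixedPoints K A) =
      ∑ L ∈ Finset.univ.filter (K ≤ ·), Nat.card {a : A // stabilizer G a = L} := by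
  classical
  have h_fixed : Nat.card (fixedPoints K A) = Nat.card {a : A // K ≤ stabilizer G a} :=
    Nat.card_congr <| Equiv.subtypeEquivRight fun a =>
      ⟨fun ha _ hk => ha ⟨_, hk⟩, fun ha k => ha k.2⟩
  rw [h_fixed, Nat.card_eq_fintype_card, Fintype.card_subtype,
    Finset.card_eq_sum_card_fiberwise (f := stabilizer G) (t := Finset.univ.filter (K ≤ ·))
      (fun a ha => by simpa using ha)]
  refine Finset.sum_congr rfl fun L hL => ?_
  rw [Nat.card_eq_fintype_card, Fintype.card_subtype]
  congr 1
  ext a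
  simp only [Finset.mem_filter, Finset.mem_univ, true_and] at hL ⊢
  exact ⟨And.right, fun h => ⟨h ▸ hL, h⟩⟩

end Counting

/-- Möbius inversion on the subgroup lattice: for a finite group `G`, a finite `G`-set `A`
and a subgroup `H ≤ G`, if `μ` is the Möbius function of the poset of subgroups of `G`
(characterized by `μ(H,H) = 1`, `μ(H,K) = 0` unless `H ≤ K`, and
`Σ_{H ≤ L ≤ K} μ(H,L) = 0` for `H < K`), then
`c_H(A) · [N_G(H) : H] = Σ_K μ(H,K) · |A^K|`, the sum over all subgroups `K` of `G`. -/
theorem orbitTypeCount_mul_relindex_eq_moebius_sum (G : Type*) [Group G] [Fintype G]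
    (A : Type*) [MulAction G A] [Fintype A] (H : Subgroup G)
    (μ : Subgroup G → Subgroup G → ℤ)
    (hμ_refl : ∀ K : Subgroup G, μ K K = 1)
    (hμ_not_le : ∀ K L : Subgroup G, ¬ K ≤ L → μ K L = 0)
    (hμ_sum : ∀ K L : Subgroup G, K < L → (∑ᶠ M ∈ Set.Icc K L, μ K M) = 0) :
    (orbitTypeCount G A H : ℤ) * (H.relIndex (Subgroup.normalizer (H : Set G)) : ℤ) =
      ∑ᶠ K : Subgroup G, μ H K * (Nat.card (MulAction.fixedPoints K A) : ℤ) := by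
  classical
  have h_fixed (K : Subgroup G) : (Nat.card (fixedPoints K A) : ℤ) =
      ∑ L ∈ Finset.univ.filter (K ≤ ·), (Nat.card {a : A // stabilizer G a = L} : ℤ) := by
    exact_mod_cast card_fixedPoints_eq_sum_card_stabilizer_eq K
  rw [finsum_eq_sum_of_fintype]
  simp only [h_fixed]
  rw [sum_moebius_mul_sum_filter_ge (hμ_refl H) (hμ_not_le H) (hμ_sum H)]
  exact_mod_cast (card_stabilizer_eq_orbitTypeCount_mul_relIndex H).symm
end

section
/- Let G be a finite cyclic group and let A, B be finite G-sets. If for every element g ∈ G the number of points of A fixed by g equals the number of points of B fixed by g (i.e., |{a ∈ A : ga = a}| = |{b ∈ B : gb = b}| for all g ∈ G), then A and B are isomorphic as G-sets. Consequently, for cyclic G, two finite G-sets whose associated permutation representations (the spaces of functions on the sets) are isomorphic are themselves isomorphic. -/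
/-!
Induct on `|A|`. Every subgroup `H` of a cyclic group is generated by one element `γ`, and the
points fixed by `γ` are exactly those whose stabilizer contains `H`. Take `H` maximal among the
stabilizers of points of `A` and of `B`, say `H = stab a`. Then `γ` fixes `a`, hence some `b ∈ B`,
and maximality forces `stab b = H`. The orbits of `a` and `b` are both isomorphic to `G ⧸ H`;
removing them preserves the equality of fixed-point counts, so induction applies to the rest.
-/

namespace MulAction

variable {G A B : Type*} [Group G] [MulAction G A] [MulAction G B]

theorem card_fixedBy_eq_of_equivariant (e : A ≃ B) (he : ∀ (g : G) (a : A), e (g • a) = g • e a)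
    (g : G) : Nat.card (fixedBy A g) = Nat.card (fixedBy B g) :=
  Nat.card_congr <| e.subtypeEquiv fun a => by
    simp only [mem_fixedBy, ← he, e.apply_eq_iff_eq]

variable (G) in
def orbitSubMulAction (a : A) : SubMulAction G A where
  carrier := orbit G a
  smul_mem' g _ := mem_orbit_of_mem_orbit g

theorem exists_equivariant_orbit_equiv_of_stabilizer_eq {a : A} {b : B}
    (h : stabilizer G a = stabilizer G b) :
    ∃ e : orbitSubMulAction G a ≃ orbitSubMulAction G b, ∀ (g : G) x, e (g • x) = g • e x := by
  let eA : orbitSubMulAction G a ≃ G ⧸ stabilizer G a := orbitEquivQuotientStabilizer G a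
  let eB : orbitSubMulAction G b ≃ G ⧸ stabilizer G b := orbitEquivQuotientStabilizer G b
  have eA_symm_smul (g : G) (q) : eA.symm (g • q) = g • eA.symm q :=
    Subtype.ext (ofQuotientStabilizer_smul G a g q)
  have eB_symm_smul (g : G) (q) : eB.symm (g • q) = g • eB.symm q :=
    Subtype.ext (ofQuotientStabilizer_smul G b g q)
  refine ⟨eA.trans ((Subgroup.quotientEquivOfEq h).trans eB.symm), fun g x => ?_⟩
  obtain ⟨q, rfl⟩ := eA.symm.surjective x
  induction q using QuotientGroup.induction_on with | H k => ?_
  simp only [Equiv.trans_apply, ← eA_symm_smul, ← eB_symm_smul, Equiv.apply_symm_apply]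
  rfl

theorem exists_equivariant_equiv_of_subMulAction_of_compl
    (p : SubMulAction G A) (q : SubMulAction G B)
    (e : p ≃ q) (he : ∀ (g : G) x, e (g • x) = g • e x)
    (f : ↥pᶜ ≃ ↥qᶜ) (hf : ∀ (g : G) x, f (g • x) = g • f x) :
    ∃ e : A ≃ B, ∀ (g : G) (a : A), e (g • a) = g • e a := by
  classical
  refine ⟨(Equiv.sumCompl (· ∈ p)).symm.trans ((e.sumCongr f).trans (Equiv.sumCompl (· ∈ q))),
    fun g a => ?_⟩
  by_cases ha : a ∈ p
  · have hga : g • a ∈ p := p.smul_mem g ha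
    simp only [Equiv.trans_apply, Equiv.sumCompl_symm_apply_of_pos ha,
      Equiv.sumCompl_symm_apply_of_pos hga, Equiv.sumCongr_apply, Sum.map_inl]
    exact congrArg Subtype.val (he g ⟨a, ha⟩)
  · have hga : g • a ∉ p := pᶜ.smul_mem g ha
    simp only [Equiv.trans_apply, Equiv.sumCompl_symm_apply_of_neg ha,
      Equiv.sumCompl_symm_apply_of_neg hga, Equiv.sumCongr_apply, Sum.map_inr]
    exact congrArg Subtype.val (hf g ⟨a, ha⟩)

theorem card_fixedBy_subMulAction (p : SubMulAction G A) (g : G) :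
    Nat.card (fixedBy p g) = Nat.card {x : fixedBy A g // ↑x ∈ p} :=
  Nat.card_congr
    { toFun x := ⟨⟨x.1, congrArg Subtype.val x.2⟩, x.1.2⟩
      invFun x := ⟨⟨x.1, x.2⟩, Subtype.ext x.1.2⟩ }

theorem card_fixedBy_eq_add_compl [Finite A] (p : SubMulAction G A) (g : G) :
    Nat.card (fixedBy A g) = Nat.card (fixedBy p g) + Nat.card (fixedBy ↥pᶜ g) := by
  classical
  rw [card_fixedBy_subMulAction, card_fixedBy_subMulAction, ← Nat.card_sum]
  exact Nat.card_congr (Equiv.sumCompl _).symm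

theorem mem_fixedBy_iff_zpowers_le_stabilizer {g : G} {a : A} :
    a ∈ fixedBy A g ↔ Subgroup.zpowers g ≤ stabilizer G a := by
  rw [Subgroup.zpowers_le, mem_stabilizer_iff, mem_fixedBy]

theorem exists_stabilizer_eq_of_maximal [IsCyclic G] [Finite A]
    (h : ∀ g : G, Nat.card (fixedBy A g) = Nat.card (fixedBy B g)) (a : A)
    (hmax : ∀ b : B, stabilizer G a ≤ stabilizer G b → stabilizer G b ≤ stabilizer G a) :
    ∃ b : B, stabilizer G b = stabilizer G a := by
  obtain ⟨γ, hγ⟩ := (stabilizer G a).isCyclic_iff_exists_zpowers_eq_top.mp inferInstance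
  have ha : a ∈ fixedBy A γ := mem_fixedBy_iff_zpowers_le_stabilizer.mpr hγ.le
  have hA : Nat.card (fixedBy A γ) ≠ 0 := Nat.card_ne_zero.mpr ⟨⟨⟨a, ha⟩⟩, inferInstance⟩
  obtain ⟨⟨b, hb⟩⟩ := (Nat.card_ne_zero.mp (h γ ▸ hA)).1
  rw [mem_fixedBy_iff_zpowers_le_stabilizer, hγ] at hb
  exact ⟨b, le_antisymm (hmax b hb) hb⟩

theorem exists_stabilizer_eq_of_card_fixedBy_eq [IsCyclic G] [Finite A] [Finite B]
    (h : ∀ g : G, Nat.card (fixedBy A g) = Nat.card (fixedBy B g)) [Nonempty (A ⊕ B)] :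
    ∃ (a : A) (b : B), stabilizer G a = stabilizer G b := by
  obtain ⟨i, -, hi⟩ := Set.finite_univ.exists_maximalFor
    (Sum.elim (stabilizer G) (stabilizer G)) (Set.univ : Set (A ⊕ B)) Set.univ_nonempty
  rcases i with a | b
  · obtain ⟨b, hb⟩ := exists_stabilizer_eq_of_maximal h a fun b => hi (j := .inr b) trivial
    exact ⟨a, b, hb.symm⟩
  · obtain ⟨a, ha⟩ := exists_stabilizer_eq_of_maximal (fun g => (h g).symm) b
      fun a => hi (j := .inl a) trivial
    exact ⟨a, b, ha⟩

theorem exists_equivariant_equiv_of_card_fixedBy_eq [IsCyclic G] [Finite A] [Finite B]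
    (h : ∀ g : G, Nat.card (fixedBy A g) = Nat.card (fixedBy B g)) :
    ∃ e : A ≃ B, ∀ (g : G) (a : A), e (g • a) = g • e a := by
  induction hn : Nat.card A using Nat.strong_induction_on generalizing A B with | _ n ih => ?_
  rcases isEmpty_or_nonempty (A ⊕ B) with hAB | hAB
  · obtain ⟨_, _⟩ := isEmpty_sum.mp hAB
    exact ⟨Equiv.equivOfIsEmpty A B, fun _ => isEmptyElim⟩
  obtain ⟨a, b, hab⟩ := exists_stabilizer_eq_of_card_fixedBy_eq h
  obtain ⟨e, he⟩ := exists_equivariant_orbit_equiv_of_stabilizer_eq hab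
  have hcompl (g : G) : Nat.card (fixedBy (↥(orbitSubMulAction G a)ᶜ) g) =
      Nat.card (fixedBy (↥(orbitSubMulAction G b)ᶜ) g) := by
    have := card_fixedBy_eq_add_compl (orbitSubMulAction G a) g
    have := card_fixedBy_eq_add_compl (orbitSubMulAction G b) g
    have := card_fixedBy_eq_of_equivariant e he g
    have := h g
    omega
  have hlt : Nat.card ↥(orbitSubMulAction G a)ᶜ < n :=
    hn ▸ Finite.card_subtype_lt (p := (· ∈ (orbitSubMulAction G a)ᶜ)) fun ha => ha (mem_orbit_self a)
  obtain ⟨f, hf⟩ := ih _ hlt hcompl rfl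
  exact exists_equivariant_equiv_of_subMulAction_of_compl _ _ e he f hf

end MulAction

theorem cyclic_gset_iso_of_card_fixedBy_eq_general (G : Type*) [Group G] [IsCyclic G]
    (A B : Type*) [MulAction G A] [MulAction G B] [Fintype A] [Fintype B]
    (h : ∀ g : G, Nat.card {a : A | g • a = a} = Nat.card {b : B | g • b = b}) :
    ∃ e : A ≃ B, ∀ (g : G) (a : A), e (g • a) = g • e a :=
  MulAction.exists_equivariant_equiv_of_card_fixedBy_eq h

/-- For a finite cyclic group `G`, two finite `G`-sets such that every element `g ∈ G` fixes
the same number of points in each are isomorphic as `G`-sets. (Hence for cyclic `G` the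
natural map from the Burnside ring to the representation ring, which sends a `G`-set to the
space of functions on it — whose character at `g` is the number of `g`-fixed points — is
injective.) -/
theorem cyclic_gset_iso_of_card_fixedBy_eq (G : Type*) [Group G] [Fintype G] [IsCyclic G]
    (A B : Type*) [MulAction G A] [MulAction G B] [Fintype A] [Fintype B]
    (h : ∀ g : G, Nat.card {a : A | g • a = a} = Nat.card {b : B | g • b = b}) :
    ∃ e : A ≃ B, ∀ (g : G) (a : A), e (g • a) = g • e a :=
  cyclic_gset_iso_of_card_fixedBy_eq_general G A B h
end

section
/- Let G be a finite abelian group acting on a finite set A, and let k ≥ 0 be an integer. Then Σ_{(g_0, g_1, …, g_k) ∈ G^{k+1}} |A^{⟨g_0, g_1, …, g_k⟩}| = |G| · Σ_{ω ∈ A/G} |G_ω|^k, where the second sum runs over the G-orbits ω of A, G_ω denotes the stabilizer of any point of the orbit ω (which is well defined since G is abelian), ⟨g_0, …, g_k⟩ is the subgroup generated by g_0, …, g_k, and A^L is the L-fixed-point set. -/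
/-!
Counting pairs (tuple, fixed point) the other way round, a point `a` is fixed by
`⟨g₀, …, g_k⟩` exactly when every `gᵢ` lies in its stabilizer, so the left side is
`Σ_a |G_a|^(k+1)`. Since `G` is abelian, `G_a` depends only on the orbit of `a`, and each orbit
contributes `|ω| · |G_ω|^(k+1) = |G| · |G_ω|^k` by the orbit-stabilizer theorem.
-/

open MulAction

theorem Fintype.sum_card_subtype_comm {α β : Type*} [Fintype α] [Fintype β] (r : α → β → Prop) :
    ∑ a, Nat.card {b // r a b} = ∑ b, Nat.card {a // r a b} := by
  classical
  simp only [Nat.card_eq_fintype_card, Fintype.card_subtype, Finset.card_filter]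
  exact Finset.sum_comm

theorem Subgroup.card_pi_mem {G : Type*} [Group G] (H : Subgroup G) (ι : Type*) [Finite ι] :
    Nat.card {gs : ι → G // ∀ i, gs i ∈ H} = Nat.card H ^ Nat.card ι := by
  rw [Nat.card_congr (Equiv.subtypePiEquivPi (p := fun _ g => g ∈ H)), Nat.card_fun]

namespace MulAction

section Group

variable {G A : Type*} [Group G] [MulAction G A]

theorem mem_fixedPoints_closure_iff {s : Set G} {a : A} :
    a ∈ fixedPoints (Subgroup.closure s) A ↔ s ⊆ stabilizer G a := by
  rw [← Subgroup.closure_le]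
  exact ⟨fun h g hg => h ⟨g, hg⟩, fun h g => h g.2⟩

theorem sum_card_fixedPoints_closure_range [Fintype G] [Fintype A] (ι : Type*) [Fintype ι]
    [DecidableEq ι] :
    ∑ gs : ι → G, Nat.card (fixedPoints (Subgroup.closure (Set.range gs)) A) =
      ∑ a : A, Nat.card (stabilizer G a) ^ Nat.card ι := by
  calc ∑ gs : ι → G, Nat.card (fixedPoints (Subgroup.closure (Set.range gs)) A)
      = ∑ gs : ι → G, Nat.card {a : A // ∀ i, gs i ∈ stabilizer G a} := by
        refine Fintype.sum_congr _ _ fun gs => Nat.card_congr (Equiv.subtypeEquivRight fun a => ?_)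
        simp only [mem_fixedPoints_closure_iff, Set.range_subset_iff, SetLike.mem_coe]
    _ = ∑ a : A, Nat.card {gs : ι → G // ∀ i, gs i ∈ stabilizer G a} :=
        Fintype.sum_card_subtype_comm _
    _ = ∑ a : A, Nat.card (stabilizer G a) ^ Nat.card ι := by
        simp only [Subgroup.card_pi_mem]

theorem coe_fixingSubgroup (s : Set A) :
    (fixingSubgroup G s : Set G) = {g : G | ∀ a ∈ s, g • a = a} :=
  Set.ext fun _ => mem_fixingSubgroup_iff G

theorem sum_comp_orbitRel_mk [Fintype A] {M : Type*} [AddCommMonoid M]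
    (f : orbitRel.Quotient G A → M) :
    ∑ a : A, f (Quotient.mk'' a) = ∑ᶠ ω : orbitRel.Quotient G A, Nat.card ω.orbit • f ω := by
  classical
  have : Fintype (orbitRel.Quotient G A) := Fintype.ofFinite _
  rw [finsum_eq_sum_of_fintype, ← Fintype.sum_fiberwise' (Quotient.mk'') f]
  refine Fintype.sum_congr _ _ fun ω => ?_
  rw [Finset.sum_const, Finset.card_univ, ← Nat.card_eq_fintype_card,
    Nat.card_congr (Equiv.subtypeEquivRight fun _ => orbitRel.Quotient.mem_orbit.symm)]

end Group

section CommGroup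

variable {G A : Type*} [CommGroup G] [MulAction G A]

theorem fixingSubgroup_orbit (a : A) : fixingSubgroup G (orbit G a) = stabilizer G a := by
  ext g
  rw [mem_fixingSubgroup_iff, mem_stabilizer_iff]
  refine ⟨fun h => h a (mem_orbit_self a), ?_⟩
  rintro h _ ⟨x, rfl⟩
  rw [smul_comm, h]

theorem card_orbit_mul_card_fixingSubgroup [Finite G] (ω : orbitRel.Quotient G A) :
    Nat.card ω.orbit * Nat.card (fixingSubgroup G ω.orbit) = Nat.card G := by
  obtain ⟨a, rfl⟩ := Quotient.mk''_surjective ω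
  rw [orbitRel.Quotient.orbit_mk, fixingSubgroup_orbit, Nat.card_coe_set_eq, ← index_stabilizer,
    Subgroup.index_mul_card]

end CommGroup

end MulAction

/-- For a finite abelian group `G` acting on a finite set `A` and `k ≥ 0`, the sum over all
`(k+1)`-tuples `(g₀, …, g_k) ∈ G^{k+1}` of the number of points of `A` fixed by the subgroup
`⟨g₀, …, g_k⟩` equals `|G| · Σ_{ω ∈ A/G} |G_ω|^k`, where `G_ω` is the common stabilizer of
the points of the orbit `ω` (well defined since `G` is abelian). -/
theorem higher_order_euler_char_eq_sum_over_orbits (G : Type*) [CommGroup G] [Fintype G]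
    (A : Type*) [MulAction G A] [Fintype A] (k : ℕ) :
    ∑ gs : Fin (k + 1) → G,
        Nat.card (MulAction.fixedPoints (Subgroup.closure (Set.range gs)) A) =
      Nat.card G *
        ∑ᶠ ω : MulAction.orbitRel.Quotient G A,
          Nat.card {g : G | ∀ a ∈ ω.orbit, g • a = a} ^ k := by
  simp only [← coe_fixingSubgroup, SetLike.coe_sort_coe]
  set F : orbitRel.Quotient G A → ℕ := fun ω => Nat.card (fixingSubgroup G ω.orbit)
  calc ∑ gs : Fin (k + 1) → G, Nat.card (fixedPoints (Subgroup.closure (Set.range gs)) A)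
      = ∑ a : A, F (Quotient.mk'' a) ^ (k + 1) := by
        rw [sum_card_fixedPoints_closure_range, Nat.card_fin]
        simp only [F, orbitRel.Quotient.orbit_mk, fixingSubgroup_orbit]
    _ = ∑ᶠ ω, Nat.card ω.orbit • F ω ^ (k + 1) := sum_comp_orbitRel_mk (F · ^ (k + 1))
    _ = ∑ᶠ ω, Nat.card G * F ω ^ k := by
        simp only [smul_eq_mul, pow_succ', ← mul_assoc, card_orbit_mul_card_fixingSubgroup, F]
    _ = Nat.card G * ∑ᶠ ω, F ω ^ k := (mul_finsum _ _).symm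
end
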